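/- arXiv:math/0504454 — 3 statements merged into one kernel-verified Lean document; each statement's English description precedes it below -/
import Mathlib

section
/- For N ≥ 1, let Q_N = { (η₁,η₂,λ) ∈ ℝ³ : N ≤ η₁+η₂ ≤ 2N, |η₁−η₂| ≤ 1/(4N), |λ| ≤ 1/2 } and R_N = { (ξ₁,ξ₂,τ) ∈ ℝ³ : |ξ₁+ξ₂| ≤ N/2, |ξ₁−ξ₂| ≤ 1/(8N), |τ| ≤ 1/4 }. Then for every (ξ,τ) ∈ R_N, the three-dimensional Lebesgue measure of the set { (η,λ) ∈ Q_N : (ξ+η, τ+λ) ∈ Q_N } is at least 2^{−5}. Consequently, the convolution χ_{Q_N(−·)} * χ_{Q_N(−·)} at (−ξ,−τ), i.e. ∫∫_{Q_N} χ_{Q_N}(ξ+η, τ+λ) dη dλ, is at least 2^{−5} for all (ξ,τ) ∈ R_N. -/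
/-!
STATEMENT 11: For `N ≥ 1`, with
`Q_N = {(η₁,η₂,λ) : N ≤ η₁+η₂ ≤ 2N, |η₁−η₂| ≤ 1/(4N), |λ| ≤ 1/2}` and
`R_N = {(ξ₁,ξ₂,τ) : |ξ₁+ξ₂| ≤ N/2, |ξ₁−ξ₂| ≤ 1/(8N), |τ| ≤ 1/4}`,
for every `(ξ,τ) ∈ R_N` the Lebesgue measure of
`{(η,λ) ∈ Q_N : (ξ+η, τ+λ) ∈ Q_N}` is at least `2^{−5}`; consequently
`∫∫_{Q_N} χ_{Q_N}(ξ+η, τ+λ) dη dλ ≥ 2^{−5}`.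

A point of ℝ³ is encoded as `((η₁, η₂), λ) : (ℝ × ℝ) × ℝ`.
-/

open MeasureTheory Real

noncomputable section

/-- The box `Q_N`. -/
def QN (N : ℝ) : Set ((ℝ × ℝ) × ℝ) :=
  {q | N ≤ q.1.1 + q.1.2 ∧ q.1.1 + q.1.2 ≤ 2 * N ∧
    |q.1.1 - q.1.2| ≤ 1 / (4 * N) ∧ |q.2| ≤ 1 / 2}

/-- The box `R_N`. -/
def RN (N : ℝ) : Set ((ℝ × ℝ) × ℝ) :=
  {q | |q.1.1 + q.1.2| ≤ N / 2 ∧ |q.1.1 - q.1.2| ≤ 1 / (8 * N) ∧ |q.2| ≤ 1 / 4}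

/-- The linear map (x,y) ↦ (x+y, x-y). -/
def sdMap : (ℝ × ℝ) →ₗ[ℝ] (ℝ × ℝ) :=
  LinearMap.prod (LinearMap.fst ℝ ℝ ℝ + LinearMap.snd ℝ ℝ ℝ)
    (LinearMap.fst ℝ ℝ ℝ - LinearMap.snd ℝ ℝ ℝ)

lemma sdMap_det : sdMap.det = -2 := by
  rw [← LinearMap.det_toMatrix (Module.Basis.finTwoProd ℝ)]
  have h : LinearMap.toMatrix (Module.Basis.finTwoProd ℝ) (Module.Basis.finTwoProd ℝ) sdMap
      = !![1,1;1,-1] := by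
    ext i j
    fin_cases i <;> fin_cases j <;>
      simp [LinearMap.toMatrix_apply, Module.Basis.finTwoProd, sdMap]
  rw [h]
  simp [Matrix.det_fin_two_of]
  norm_num

lemma measurableSet_QN (N : ℝ) : MeasurableSet (QN N) := by
  have : QN N = {q : (ℝ × ℝ) × ℝ | N ≤ q.1.1 + q.1.2} ∩
      ({q | q.1.1 + q.1.2 ≤ 2 * N} ∩
      ({q | |q.1.1 - q.1.2| ≤ 1 / (4 * N)} ∩ {q | |q.2| ≤ 1 / 2})) := by
    ext q; simp [QN, Set.mem_setOf_eq, and_assoc]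
  rw [this]
  refine MeasurableSet.inter ?_ (MeasurableSet.inter ?_ (MeasurableSet.inter ?_ ?_)) <;>
  · apply measurableSet_le <;> fun_prop

set_option maxHeartbeats 1000000 in
theorem measure_shifted_intersection_ge (N : ℝ) (hN : 1 ≤ N) :
    ∀ q ∈ RN N,
      ENNReal.ofReal ((2 : ℝ) ^ (-(5 : ℤ))) ≤
        volume {p : (ℝ × ℝ) × ℝ | p ∈ QN N ∧ (q.1 + p.1, q.2 + p.2) ∈ QN N} ∧
      (2 : ℝ) ^ (-(5 : ℤ)) ≤
        ∫ p in QN N, Set.indicator (QN N) (fun _ => (1 : ℝ)) (q.1 + p.1, q.2 + p.2) := by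
  intro q hq
  obtain ⟨hσ, hδ, hτ⟩ := hq
  have hN0 : (0:ℝ) < N := by linarith
  have h4N : (0:ℝ) < 4 * N := by linarith
  have h8N : (0:ℝ) < 8 * N := by linarith
  have hrec2 : 2 * (1 / (8 * N)) = 1 / (4 * N) := by
    field_simp; ring
  rw [abs_le] at hσ hδ hτ
  set σ := q.1.1 + q.1.2 with hσdef
  set δ := q.1.1 - q.1.2 with hδdef
  -- the explicit sub-box
  set I : Set ℝ := Set.Icc (5*N/4 - σ/2) (7*N/4 - σ/2) with hI
  set J : Set ℝ := Set.Icc (-(1/(8*N))) (1/(8*N)) with hJ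
  set K : Set ℝ := Set.Icc (-(1/4 : ℝ)) (1/4) with hK
  set A : Set ((ℝ × ℝ) × ℝ) :=
    {p : (ℝ × ℝ) × ℝ | p ∈ QN N ∧ (q.1 + p.1, q.2 + p.2) ∈ QN N} with hA
  have hsub : (sdMap ⁻¹' (I ×ˢ J)) ×ˢ K ⊆ A := by
    rintro ⟨⟨x, y⟩, l⟩ ⟨⟨⟨hs1, hs2⟩, hd1, hd2⟩, hl1, hl2⟩
    simp only [sdMap, LinearMap.prod_apply, LinearMap.fst_apply, LinearMap.snd_apply,
      LinearMap.add_apply, LinearMap.sub_apply, Pi.prod, Function.prod] at hs1 hs2 hd1 hd2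
    have hrecd : |x - y| ≤ 1 / (8 * N) := abs_le.2 ⟨hd1, hd2⟩
    have h1 : |x - y| ≤ 1 / (4 * N) := by
      rw [← hrec2]; linarith [abs_nonneg (x - y)]
    have h2 : |q.1.1 + x - (q.1.2 + y)| ≤ 1 / (4 * N) := by
      have e : q.1.1 + x - (q.1.2 + y) = δ + (x - y) := by rw [hδdef]; ring
      rw [e, ← hrec2]
      calc |δ + (x - y)| ≤ |δ| + |x - y| := abs_add_le _ _
        _ ≤ 1/(8*N) + 1/(8*N) := add_le_add (abs_le.2 hδ) hrecd
        _ = 2 * (1/(8*N)) := by ring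
    refine ⟨⟨by linarith, by linarith, h1, abs_le.2 ⟨by linarith, by linarith⟩⟩,
      ⟨?_, ?_, h2, abs_le.2 ⟨by linarith, by linarith⟩⟩⟩
    · show N ≤ q.1.1 + x + (q.1.2 + y)
      have e : q.1.1 + x + (q.1.2 + y) = σ + (x + y) := by rw [hσdef]; ring
      rw [e]; linarith
    · show q.1.1 + x + (q.1.2 + y) ≤ 2 * N
      have e : q.1.1 + x + (q.1.2 + y) = σ + (x + y) := by rw [hσdef]; ring
      rw [e]; linarith
  -- volume of the sub-box
  have habs : |((-2:ℝ))⁻¹| = 1/2 := by norm_num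
  have e1 : (7*N/4 - σ/2) - (5*N/4 - σ/2) = N/2 := by ring
  have e2 : (1/(8*N)) - (-(1/(8*N))) = 2 * (1/(8*N)) := by ring
  have hvolT : volume (sdMap ⁻¹' (I ×ˢ J)) = ENNReal.ofReal (1/16) := by
    rw [Measure.addHaar_preimage_linearMap volume (by rw [sdMap_det]; norm_num),
      sdMap_det, Measure.volume_eq_prod, Measure.prod_prod, hI, hJ,
      Real.volume_Icc, Real.volume_Icc, e1, e2, hrec2, habs,
      ← ENNReal.ofReal_mul (by positivity : (0:ℝ) ≤ N/2),
      ← ENNReal.ofReal_mul (by norm_num : (0:ℝ) ≤ (1:ℝ)/2)]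
    congr 1
    field_simp
    ring
  have hvolS : volume ((sdMap ⁻¹' (I ×ˢ J)) ×ˢ K) = ENNReal.ofReal (1/32) := by
    rw [Measure.volume_eq_prod, Measure.prod_prod, hvolT, hK, Real.volume_Icc,
      ← ENNReal.ofReal_mul (by norm_num : (0:ℝ) ≤ (1:ℝ)/16)]
    norm_num
  have hlow : ENNReal.ofReal ((2 : ℝ) ^ (-(5 : ℤ))) ≤ volume A := by
    calc ENNReal.ofReal ((2 : ℝ) ^ (-(5 : ℤ)))
        ≤ ENNReal.ofReal (1/32) := by
          apply ENNReal.ofReal_le_ofReal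
          norm_num
      _ = volume ((sdMap ⁻¹' (I ×ˢ J)) ×ˢ K) := hvolS.symm
      _ ≤ volume A := measure_mono hsub
  refine ⟨hlow, ?_⟩
  -- second part
  have hmeas : MeasurableSet ((fun p : (ℝ × ℝ) × ℝ => (q.1 + p.1, q.2 + p.2)) ⁻¹' QN N) := by
    apply (measurableSet_QN N).preimage
    fun_prop
  have hAeq : QN N ∩ ((fun p : (ℝ × ℝ) × ℝ => (q.1 + p.1, q.2 + p.2)) ⁻¹' QN N) = A := by
    ext p
    simp only [hA, Set.mem_setOf_eq, Set.mem_inter_iff, Set.mem_preimage]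
  have hfun : (fun p : (ℝ × ℝ) × ℝ =>
      Set.indicator (QN N) (fun _ => (1 : ℝ)) (q.1 + p.1, q.2 + p.2))
      = Set.indicator ((fun p : (ℝ × ℝ) × ℝ => (q.1 + p.1, q.2 + p.2)) ⁻¹' QN N)
        (fun _ => (1 : ℝ)) := by
    ext p
    by_cases h : (q.1 + p.1, q.2 + p.2) ∈ QN N <;>
      simp [Set.indicator_apply, h]
  have hint : ∫ p in QN N, Set.indicator (QN N) (fun _ => (1 : ℝ)) (q.1 + p.1, q.2 + p.2)
      = (volume A).toReal := by
    rw [hfun, MeasureTheory.setIntegral_indicator hmeas, setIntegral_const, hAeq, smul_eq_mul,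
      mul_one, measureReal_def]
  rw [hint]
  -- finiteness of volume A
  have hbox : A ⊆ (Set.Icc 0 (2*N) ×ˢ Set.Icc 0 (2*N)) ×ˢ Set.Icc (-(1/2 : ℝ)) (1/2) := by
    rintro ⟨⟨x, y⟩, l⟩ ⟨⟨h1, h2, h3, h4⟩, -⟩
    have h3' := abs_le.1 h3
    have h4' := abs_le.1 h4
    have hsmall : 1 / (4 * N) ≤ 1 / 4 := by
      rw [div_le_div_iff₀ h4N (by norm_num)]; nlinarith
    simp only [Set.mem_prod, Set.mem_Icc]
    refine ⟨⟨⟨?_, ?_⟩, ?_, ?_⟩, h4'.1, h4'.2⟩ <;> nlinarith [h3'.1, h3'.2]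
  have hfin : volume A ≠ ⊤ := by
    apply ne_top_of_le_ne_top _ (measure_mono hbox)
    rw [Measure.volume_eq_prod, Measure.prod_prod, Measure.volume_eq_prod,
      Measure.prod_prod]
    exact ENNReal.mul_ne_top (ENNReal.mul_ne_top measure_Icc_lt_top.ne
      measure_Icc_lt_top.ne) measure_Icc_lt_top.ne
  have hmono := ENNReal.toReal_mono hfin hlow
  rwa [ENNReal.toReal_ofReal (by positivity)] at hmono

end
end

section
/- Let a(ξ)=ξ₁²−ξ₂² and s < 0, b ∈ ℝ, and set B = max{1, |b|}. For N ≥ 1, let u_N : ℝ²×ℝ → ℂ be the function whose space-time Fourier transform is ũ_N = χ_{Q_N}, where Q_N = { (ξ₁,ξ₂,τ) ∈ ℝ³ : N ≤ ξ₁+ξ₂ ≤ 2N, |ξ₁−ξ₂| ≤ 1/(4N), |τ| ≤ 1/2 }. Then ‖u_N‖_{s,b} ≤ 2^{B−s−1} N^s. -/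
/-!
STATEMENT 12: Let `a(ξ) = ξ₁² − ξ₂²`, `s < 0`, `b ∈ ℝ`, `B = max{1,|b|}`.
For `N ≥ 1` let `u_N` have space-time Fourier transform `χ_{Q_N}`, with
`Q_N = {(ξ₁,ξ₂,τ) : N ≤ ξ₁+ξ₂ ≤ 2N, |ξ₁−ξ₂| ≤ 1/(4N), |τ| ≤ 1/2}`.
Then `‖u_N‖_{s,b} ≤ 2^{B−s−1} N^s`.

As sanctioned by the context, since `ũ_N = χ_{Q_N}`, the norm `‖u_N‖_{s,b}`
here equals `(∫∫_{Q_N} ⟨τ−a(ξ)⟩^{2b} ⟨ξ⟩^{2s} dξ dτ)^{1/2}`, i.e.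
`(∫∫_{Q_N} (1+(τ−a(ξ))²)^b (1+|ξ|²)^s dξ dτ)^{1/2}`, which is the quantity
estimated below.  A point of ℝ³ is encoded as `((ξ₁, ξ₂), τ) : (ℝ × ℝ) × ℝ`.
-/

open MeasureTheory Real

noncomputable section

/-- The symbol `a(ξ) = ξ₁² − ξ₂²`. -/
def aSym (ξ : ℝ × ℝ) : ℝ := ξ.1 ^ 2 - ξ.2 ^ 2

theorem Xnorm_uN_le (s : ℝ) (hs : s < 0) (b : ℝ) (N : ℝ) (hN : 1 ≤ N) :
    (∫ q in QN N,
        (1 + (q.2 - aSym q.1) ^ 2) ^ b * (1 + q.1.1 ^ 2 + q.1.2 ^ 2) ^ s) ^ ((1 : ℝ) / 2)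
      ≤ (2 : ℝ) ^ (max 1 |b| - s - 1) * N ^ s := by
  have hN0 : (0 : ℝ) < N := lt_of_lt_of_le one_pos hN
  set B := max 1 |b| with hBdef
  have hB1 : (1 : ℝ) ≤ B := le_max_left _ _
  have hBb : |b| ≤ B := le_max_right _ _
  -- measurability of QN
  have hQm : MeasurableSet (QN N) := by
    have hrw : QN N = ((fun q : (ℝ × ℝ) × ℝ => q.1.1 + q.1.2) ⁻¹' Set.Icc N (2 * N)) ∩
        ((fun q : (ℝ × ℝ) × ℝ => q.1.1 - q.1.2) ⁻¹' Set.Icc (-(1 / (4 * N))) (1 / (4 * N))) ∩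
        ((fun q : (ℝ × ℝ) × ℝ => q.2) ⁻¹' Set.Icc (-(1 / 2 : ℝ)) (1 / 2)) := by
      ext q
      simp only [QN, Set.mem_setOf_eq, Set.mem_inter_iff, Set.mem_preimage, Set.mem_Icc,
        abs_le]
      tauto
    rw [hrw]
    exact (((measurable_fst.fst.add measurable_fst.snd) measurableSet_Icc).inter
      ((measurable_fst.fst.sub measurable_fst.snd) measurableSet_Icc)).inter
      (measurable_snd measurableSet_Icc)
  -- measure bound
  have hc4 : (1 : ℝ) / (4 * N) ≤ 1 / 4 := by
    apply div_le_div_of_nonneg_left one_pos.le (by norm_num) <;> nlinarith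
  have hsub : QN N ⊆
      ((fun p : ℝ × ℝ => (p.1 - p.2, p.2)) ⁻¹'
        (Set.Icc (-(1 / (4 * N))) (1 / (4 * N)) ×ˢ Set.Icc (N / 2 - 1 / 8) (N + 1 / 8))) ×ˢ
      Set.Icc (-(1 / 2 : ℝ)) (1 / 2) := by
    rintro ⟨⟨x, y⟩, t⟩ ⟨h1, h2, h3, h4⟩
    simp only [Set.mem_setOf_eq] at h1 h2 h3 h4
    rw [abs_le] at h3 h4
    refine ⟨⟨⟨h3.1, h3.2⟩, ?_, ?_⟩, h4.1, h4.2⟩ <;> simp only [] <;> nlinarith [hc4, h3.1, h3.2]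
  have hvol : volume (QN N) ≤ ENNReal.ofReal (1 / 2) := by
    refine le_trans (measure_mono hsub) ?_
    have hS2 := (measurePreserving_sub_prod (volume : Measure ℝ) volume).measure_preimage
        (s := Set.Icc (-(1 / (4 * N))) (1 / (4 * N)) ×ˢ Set.Icc (N / 2 - 1 / 8) (N + 1 / 8))
        (measurableSet_Icc.prod measurableSet_Icc).nullMeasurableSet
    rw [Measure.volume_eq_prod, Measure.prod_prod, Measure.volume_eq_prod ℝ ℝ, hS2,
      Measure.prod_prod]
    rw [Real.volume_Icc, Real.volume_Icc, Real.volume_Icc]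
    have h1 : (1 : ℝ) / (4 * N) - -(1 / (4 * N)) = 1 / (2 * N) := by ring
    have h2 : N + 1 / 8 - (N / 2 - 1 / 8) = N / 2 + 1 / 4 := by ring
    have h3 : (1 : ℝ) / 2 - -(1 / 2) = 1 := by ring
    rw [h1, h2, h3]
    rw [← ENNReal.ofReal_mul (by positivity), ← ENNReal.ofReal_mul (by positivity)]
    apply ENNReal.ofReal_le_ofReal
    rw [mul_one]
    have : (1 : ℝ) / (2 * N) * (N / 2 + 1 / 4) = 1 / 4 + 1 / (8 * N) := by
      field_simp; ring
    rw [this]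
    have : (1 : ℝ) / (8 * N) ≤ 1 / 8 := by
      apply div_le_div_of_nonneg_left one_pos.le (by norm_num) <;> nlinarith
    linarith
  have hvolfin : volume (QN N) < ⊤ :=
    lt_of_le_of_lt hvol ENNReal.ofReal_lt_top
  have hvolReal : (volume (QN N)).toReal ≤ 1 / 2 :=
    ENNReal.toReal_le_of_le_ofReal (by norm_num) hvol
  -- pointwise bound
  set C : ℝ := 2 ^ |b| * (N ^ 2 / 2) ^ s with hCdef
  have hC0 : 0 ≤ C := by positivity
  have hpt : ∀ q ∈ QN N,
      ‖(1 + (q.2 - aSym q.1) ^ 2) ^ b * (1 + q.1.1 ^ 2 + q.1.2 ^ 2) ^ s‖ ≤ C := by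
    rintro ⟨⟨x, y⟩, t⟩ ⟨h1, h2, h3, h4⟩
    simp only [Set.mem_setOf_eq] at h1 h2 h3 h4
    have hxypos : 0 < x + y := lt_of_lt_of_le hN0 h1
    have haSym : aSym (x, y) = (x + y) * (x - y) := by simp [aSym]; ring
    have habs : |t - aSym (x, y)| ≤ 1 := by
      rw [haSym]
      have h5 : |(x + y) * (x - y)| ≤ 1 / 2 := by
        rw [abs_mul, abs_of_pos hxypos]
        calc (x + y) * |x - y| ≤ (2 * N) * (1 / (4 * N)) := by
              apply mul_le_mul h2 h3 (abs_nonneg _) (by linarith)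
          _ = 1 / 2 := by field_simp; ring
      calc |t - (x + y) * (x - y)| ≤ |t| + |(x + y) * (x - y)| := abs_sub _ _
        _ ≤ 1 / 2 + 1 / 2 := add_le_add h4 h5
        _ = 1 := by norm_num
    have hd2 : (t - aSym (x, y)) ^ 2 ≤ 1 := by
      have := abs_nonneg (t - aSym (x, y))
      nlinarith [sq_abs (t - aSym (x, y))]
    have hfac1 : (1 + (t - aSym (x, y)) ^ 2) ^ b ≤ 2 ^ |b| := by
      have h1' : (1 : ℝ) ≤ 1 + (t - aSym (x, y)) ^ 2 := by nlinarith [sq_nonneg (t - aSym (x,y))]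
      calc (1 + (t - aSym (x, y)) ^ 2) ^ b ≤ (1 + (t - aSym (x, y)) ^ 2) ^ |b| :=
            Real.rpow_le_rpow_of_exponent_le h1' (le_abs_self b)
        _ ≤ 2 ^ |b| := Real.rpow_le_rpow (by linarith) (by linarith) (abs_nonneg b)
    have hfac2 : (1 + x ^ 2 + y ^ 2) ^ s ≤ (N ^ 2 / 2) ^ s := by
      apply Real.rpow_le_rpow_of_nonpos (by positivity) ?_ hs.le
      nlinarith [sq_nonneg (x - y), sq_nonneg (x + y)]
    rw [norm_mul, Real.norm_rpow_of_nonneg (by positivity), Real.norm_rpow_of_nonneg (by positivity)]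
    rw [Real.norm_of_nonneg (by positivity), Real.norm_of_nonneg (by positivity)]
    exact mul_le_mul hfac1 hfac2 (by positivity) (by positivity)
  -- integral bound
  have hint : (∫ q in QN N,
      (1 + (q.2 - aSym q.1) ^ 2) ^ b * (1 + q.1.1 ^ 2 + q.1.2 ^ 2) ^ s) ≤ C * (1 / 2) := by
    calc (∫ q in QN N, (1 + (q.2 - aSym q.1) ^ 2) ^ b * (1 + q.1.1 ^ 2 + q.1.2 ^ 2) ^ s)
        ≤ ‖∫ q in QN N, (1 + (q.2 - aSym q.1) ^ 2) ^ b * (1 + q.1.1 ^ 2 + q.1.2 ^ 2) ^ s‖ :=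
          le_abs_self _
      _ ≤ C * (volume (QN N)).toReal :=
          MeasureTheory.norm_setIntegral_le_of_norm_le_const hvolfin hpt
      _ ≤ C * (1 / 2) := mul_le_mul_of_nonneg_left hvolReal hC0
  have hintnn : 0 ≤ (∫ q in QN N,
      (1 + (q.2 - aSym q.1) ^ 2) ^ b * (1 + q.1.1 ^ 2 + q.1.2 ^ 2) ^ s) :=
    setIntegral_nonneg hQm (fun q _ => by positivity)
  -- final computation
  have hCval : C * (1 / 2) = (2 : ℝ) ^ (|b| - s - 1) * (N ^ s) ^ 2 := by
    have hNsq : ((N : ℝ) ^ 2) ^ s = (N ^ s) ^ 2 := by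
      rw [← Real.rpow_natCast N 2, ← Real.rpow_natCast (N ^ s) 2,
        ← Real.rpow_mul hN0.le, ← Real.rpow_mul hN0.le]
      norm_num [mul_comm]
    rw [hCdef, Real.div_rpow (by positivity) (by norm_num), hNsq,
      Real.rpow_sub two_pos, Real.rpow_sub two_pos, Real.rpow_one]
    field_simp
  calc (∫ q in QN N,
        (1 + (q.2 - aSym q.1) ^ 2) ^ b * (1 + q.1.1 ^ 2 + q.1.2 ^ 2) ^ s) ^ ((1 : ℝ) / 2)
      ≤ (C * (1 / 2)) ^ ((1 : ℝ) / 2) :=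
        Real.rpow_le_rpow hintnn hint (by norm_num)
    _ = (2 : ℝ) ^ ((|b| - s - 1) * (1 / 2)) * N ^ s := by
        rw [hCval, Real.mul_rpow (by positivity) (by positivity),
          ← Real.rpow_natCast (N ^ s) 2, ← Real.rpow_mul (Real.rpow_nonneg hN0.le s),
          ← Real.rpow_mul (by norm_num)]
        norm_num
    _ ≤ (2 : ℝ) ^ (B - s - 1) * N ^ s := by
        apply mul_le_mul_of_nonneg_right ?_ (by positivity)
        apply Real.rpow_le_rpow_of_exponent_le one_le_two
        linarith

end
end

section
/- Let a(ξ)=ξ₁²−ξ₂² and s < 0, b ∈ ℝ, and set B = max{1, |b|}. For N ≥ 1, let v_N : ℝ²×ℝ → ℂ be the function whose space-time Fourier transform is ṽ_N(ξ,τ) = χ_{Q_N}(−ξ,−τ), where Q_N = { (ξ₁,ξ₂,τ) ∈ ℝ³ : N ≤ ξ₁+ξ₂ ≤ 2N, |ξ₁−ξ₂| ≤ 1/(4N), |τ| ≤ 1/2 }. Then ‖v_N‖_{s,b} ≤ 2^{B−s−1} N^s. -/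
/-!
STATEMENT 13: Let `a(ξ) = ξ₁² − ξ₂²`, `s < 0`, `b ∈ ℝ`, `B = max{1,|b|}`.
For `N ≥ 1` let `v_N` have space-time Fourier transform
`ṽ_N(ξ,τ) = χ_{Q_N}(−ξ,−τ)`, with
`Q_N = {(ξ₁,ξ₂,τ) : N ≤ ξ₁+ξ₂ ≤ 2N, |ξ₁−ξ₂| ≤ 1/(4N), |τ| ≤ 1/2}`.
Then `‖v_N‖_{s,b} ≤ 2^{B−s−1} N^s`.

As sanctioned by the context, since `ṽ_N(ξ,τ) = χ_{Q_N}(−ξ,−τ)` and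
`a(−ξ) = a(ξ)`, the norm `‖v_N‖_{s,b}` here equals
`(∫∫_{Q_N} ⟨τ+a(ξ)⟩^{2b} ⟨ξ⟩^{2s} dξ dτ)^{1/2}`, i.e.
`(∫∫_{Q_N} (1+(τ+a(ξ))²)^b (1+|ξ|²)^s dξ dτ)^{1/2}`, which is the quantity
estimated below.  A point of ℝ³ is encoded as `((ξ₁, ξ₂), τ) : (ℝ × ℝ) × ℝ`.
-/

open MeasureTheory Real

noncomputable section

lemma QN_isClosed (N : ℝ) : IsClosed (QN N) := by
  have h1 : IsClosed {q : (ℝ × ℝ) × ℝ | N ≤ q.1.1 + q.1.2} :=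
    isClosed_le continuous_const (by fun_prop)
  have h2 : IsClosed {q : (ℝ × ℝ) × ℝ | q.1.1 + q.1.2 ≤ 2 * N} :=
    isClosed_le (by fun_prop) continuous_const
  have h3 : IsClosed {q : (ℝ × ℝ) × ℝ | |q.1.1 - q.1.2| ≤ 1 / (4 * N)} :=
    isClosed_le (by fun_prop) continuous_const
  have h4 : IsClosed {q : (ℝ × ℝ) × ℝ | |q.2| ≤ 1 / 2} :=
    isClosed_le (by fun_prop) continuous_const
  have : QN N = {q : (ℝ × ℝ) × ℝ | N ≤ q.1.1 + q.1.2} ∩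
      ({q | q.1.1 + q.1.2 ≤ 2 * N} ∩ ({q | |q.1.1 - q.1.2| ≤ 1 / (4 * N)} ∩ {q | |q.2| ≤ 1 / 2})) := by
    ext q; simp [QN, Set.mem_setOf_eq, and_assoc]
  rw [this]
  exact h1.inter (h2.inter (h3.inter h4))

lemma QN_volume_le (N : ℝ) (hN : 1 ≤ N) :
    volume (QN N) ≤ ENNReal.ofReal (1 / 2) := by
  have hNpos : (0 : ℝ) < N := by linarith
  set fL : ℝ → ℝ := fun x => x - 5 / (16 * N) with hfL
  set gL : ℝ → ℝ := fun x => x + 5 / (16 * N) with hgL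
  set I : Set ℝ := Set.Icc (N / 2 - 1 / 8) (N + 1 / 8) with hI
  -- containment
  have hsub : QN N ⊆ (regionBetween fL gL I) ×ˢ Set.Icc (-(1 / 2)) (1 / 2) := by
    rintro ⟨⟨x, y⟩, t⟩ ⟨hq1, hq2, hq3, hq4⟩
    have hq1' : N ≤ x + y := hq1
    have hq2' : x + y ≤ 2 * N := hq2
    have hw : -(1 / (4 * N)) ≤ x - y ∧ x - y ≤ 1 / (4 * N) := abs_le.mp hq3
    have ht : -(1 / 2) ≤ t ∧ t ≤ 1 / 2 := abs_le.mp hq4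
    have hwle : 1 / (4 * N) ≤ 1 / 4 := by
      rw [div_le_div_iff₀ (by linarith) (by norm_num)]; linarith
    have hwlt : 1 / (4 * N) < 5 / (16 * N) := by
      rw [div_lt_div_iff₀ (by linarith) (by linarith)]; linarith
    refine ⟨⟨Set.mem_Icc.mpr ⟨by linarith [hw.1, hw.2], by linarith [hw.1, hw.2]⟩,
      Set.mem_Ioo.mpr ⟨?_, ?_⟩⟩, Set.mem_Icc.mpr ⟨ht.1, ht.2⟩⟩
    · show x - 5 / (16 * N) < y; linarith [hw.2]
    · show y < x + 5 / (16 * N); linarith [hw.1]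
  have hfint : IntegrableOn fL I := (by fun_prop : Continuous fL).integrableOn_Icc
  have hgint : IntegrableOn gL I := (by fun_prop : Continuous gL).integrableOn_Icc
  have hregion : volume (regionBetween fL gL I) =
      ENNReal.ofReal (∫ y in I, (gL - fL) y) := by
    rw [MeasureTheory.Measure.volume_eq_prod ℝ ℝ]
    exact volume_regionBetween_eq_integral hfint hgint measurableSet_Icc
      (fun x _ => by
        show x - 5 / (16 * N) ≤ x + 5 / (16 * N)
        have h5 : (0:ℝ) < 5 / (16 * N) := by positivity
        linarith)
  have hdiff : (gL - fL) = fun _ : ℝ => 5 / (8 * N) := by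
    funext x; simp only [Pi.sub_apply, hfL, hgL]; ring
  have hIvol : (volume I).toReal = N / 2 + 1 / 4 := by
    rw [hI, Real.volume_Icc, ENNReal.toReal_ofReal (by linarith)]; ring
  have hintval : (∫ y in I, (gL - fL) y) = (N / 2 + 1 / 4) * (5 / (8 * N)) := by
    rw [hdiff, setIntegral_const, smul_eq_mul, measureReal_def, hIvol]
  have hhalf : (N / 2 + 1 / 4) * (5 / (8 * N)) ≤ 1 / 2 := by
    rw [mul_comm, div_mul_eq_mul_div, div_le_div_iff₀ (by linarith) (by norm_num)]
    nlinarith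
  calc volume (QN N) ≤ volume ((regionBetween fL gL I) ×ˢ Set.Icc (-(1 / 2 : ℝ)) (1 / 2)) :=
        measure_mono hsub
    _ = volume (regionBetween fL gL I) * volume (Set.Icc (-(1 / 2 : ℝ)) (1 / 2)) := by
        rw [MeasureTheory.Measure.volume_eq_prod, Measure.prod_prod]
    _ ≤ ENNReal.ofReal (1 / 2) * 1 := by
        rw [hregion, hintval, Real.volume_Icc]
        exact mul_le_mul' (ENNReal.ofReal_le_ofReal hhalf)
          (by rw [show (1 / 2 : ℝ) - -(1 / 2) = 1 by norm_num]; simp)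
    _ = ENNReal.ofReal (1 / 2) := mul_one _

theorem Xnorm_vN_le (s : ℝ) (hs : s < 0) (b : ℝ) (N : ℝ) (hN : 1 ≤ N) :
    (∫ q in QN N,
        (1 + (q.2 + aSym q.1) ^ 2) ^ b * (1 + q.1.1 ^ 2 + q.1.2 ^ 2) ^ s) ^ ((1 : ℝ) / 2)
      ≤ (2 : ℝ) ^ (max 1 |b| - s - 1) * N ^ s := by
  have hNpos : (0 : ℝ) < N := by linarith
  set B : ℝ := max 1 |b| with hB
  have hB1 : (1 : ℝ) ≤ B := le_max_left _ _
  have hQmeas : MeasurableSet (QN N) := (QN_isClosed N).measurableSet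
  set F : (ℝ × ℝ) × ℝ → ℝ :=
    fun q => (1 + (q.2 + aSym q.1) ^ 2) ^ b * (1 + q.1.1 ^ 2 + q.1.2 ^ 2) ^ s with hF
  set C : ℝ := (2 : ℝ) ^ B * ((2 : ℝ) ^ (-s) * N ^ (2 * s)) with hC
  have hCnonneg : 0 ≤ C := by positivity
  -- pointwise bound
  have hbound : ∀ q ∈ QN N, ‖F q‖ ≤ C := by
    rintro ⟨⟨x, y⟩, t⟩ ⟨hq1, hq2, hq3, hq4⟩
    have hFnn : 0 ≤ F ((x, y), t) := by simp only [hF]; positivity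
    rw [Real.norm_eq_abs, abs_of_nonneg hFnn]
    have hsum_pos : 0 < x + y := by linarith
    have ha : |x ^ 2 - y ^ 2| ≤ 1 / 2 := by
      have hxy : x ^ 2 - y ^ 2 = (x + y) * (x - y) := by ring
      rw [hxy, abs_mul, abs_of_pos hsum_pos]
      calc (x + y) * |x - y| ≤ (2 * N) * (1 / (4 * N)) :=
            mul_le_mul hq2 hq3 (abs_nonneg _) (by linarith)
        _ = 1 / 2 := by field_simp; ring
    have hτ := abs_le.mp hq4
    have ha' := abs_le.mp ha
    have hz1 : (1 : ℝ) ≤ 1 + (t + aSym (x, y)) ^ 2 := by nlinarith [sq_nonneg (t + aSym (x, y))]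
    have hz2 : 1 + (t + aSym (x, y)) ^ 2 ≤ 2 := by
      have : (t + aSym (x, y)) ^ 2 ≤ 1 := by
        simp only [aSym]; nlinarith
      linarith
    have hfac1 : (1 + (t + aSym (x, y)) ^ 2) ^ b ≤ (2 : ℝ) ^ B := by
      rcases le_or_gt 0 b with hb | hb
      · calc (1 + (t + aSym (x, y)) ^ 2) ^ b ≤ (2 : ℝ) ^ b :=
              Real.rpow_le_rpow (by linarith) hz2 hb
          _ ≤ (2 : ℝ) ^ B := Real.rpow_le_rpow_of_exponent_le one_le_two
              (le_trans (le_abs_self b) (le_max_right _ _))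
      · calc (1 + (t + aSym (x, y)) ^ 2) ^ b ≤ (1 : ℝ) ^ b :=
              Real.rpow_le_rpow_of_nonpos one_pos hz1 hb.le
          _ = (2 : ℝ) ^ (0 : ℝ) := by rw [Real.one_rpow, Real.rpow_zero]
          _ ≤ (2 : ℝ) ^ B := Real.rpow_le_rpow_of_exponent_le one_le_two (by linarith)
    have hN2 : N ^ 2 / 2 ≤ 1 + x ^ 2 + y ^ 2 := by nlinarith [sq_nonneg (x - y)]
    have hfac2 : (1 + x ^ 2 + y ^ 2) ^ s ≤ (2 : ℝ) ^ (-s) * N ^ (2 * s) := by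
      have h1 : (1 + x ^ 2 + y ^ 2) ^ s ≤ (N ^ 2 / 2) ^ s :=
        Real.rpow_le_rpow_of_nonpos (by positivity) hN2 hs.le
      have h2 : (N ^ 2 / 2 : ℝ) ^ s = (2 : ℝ) ^ (-s) * N ^ (2 * s) := by
        rw [Real.div_rpow (by positivity) (by norm_num), Real.rpow_neg (by norm_num),
          ← Real.rpow_natCast N 2, ← Real.rpow_mul hNpos.le]
        push_cast
        rw [div_eq_mul_inv, mul_comm]
      linarith
    calc F ((x, y), t) ≤ (2 : ℝ) ^ B * ((2 : ℝ) ^ (-s) * N ^ (2 * s)) :=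
          mul_le_mul hfac1 hfac2 (by positivity) (by positivity)
      _ = C := rfl
  have hvol := QN_volume_le N hN
  have hvol_lt : volume (QN N) < ⊤ := lt_of_le_of_lt hvol ENNReal.ofReal_lt_top
  have hvolR : (volume (QN N)).toReal ≤ 1 / 2 :=
    ENNReal.toReal_le_of_le_ofReal (by norm_num) hvol
  have hmeasF : AEStronglyMeasurable F (volume.restrict (QN N)) := by
    have hcont : Continuous F := by
      apply Continuous.mul
      · refine Continuous.rpow_const ?_ (fun q => Or.inl (by positivity))
        unfold aSym; fun_prop
      · refine Continuous.rpow_const ?_ (fun q => Or.inl (by positivity))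
        fun_prop
    exact hcont.aestronglyMeasurable
  have hnorm : ‖∫ q in QN N, F q‖ ≤ C * (volume (QN N)).toReal :=
    norm_setIntegral_le_of_norm_le_const hvol_lt hbound
  have hint_le : (∫ q in QN N, F q) ≤ (2 : ℝ) ^ (B - s - 1) * N ^ (2 * s) := by
    have h1 : (∫ q in QN N, F q) ≤ C * (volume (QN N)).toReal :=
      le_trans (le_abs_self _) hnorm
    have h2 : C * (volume (QN N)).toReal ≤ C * (1 / 2) :=
      mul_le_mul_of_nonneg_left hvolR hCnonneg
    have h3 : C * (1 / 2) = (2 : ℝ) ^ (B - s - 1) * N ^ (2 * s) := by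
      rw [hC, show B - s - 1 = B + -s + -1 by ring, Real.rpow_add two_pos,
        Real.rpow_add two_pos, Real.rpow_neg_one]
      ring
    linarith
  have hint_nonneg : 0 ≤ ∫ q in QN N, F q :=
    setIntegral_nonneg hQmeas (fun q _ => by simp only [hF]; positivity)
  calc (∫ q in QN N, F q) ^ ((1 : ℝ) / 2)
      ≤ ((2 : ℝ) ^ (B - s - 1) * N ^ (2 * s)) ^ ((1 : ℝ) / 2) :=
        Real.rpow_le_rpow hint_nonneg hint_le (by norm_num)
    _ = (2 : ℝ) ^ ((B - s - 1) * (1 / 2)) * N ^ s := by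
        rw [Real.mul_rpow (by positivity) (by positivity),
          ← Real.rpow_mul (by norm_num : (0:ℝ) ≤ 2), ← Real.rpow_mul hNpos.le,
          show 2 * s * (1 / 2) = s by ring]
    _ ≤ (2 : ℝ) ^ (B - s - 1) * N ^ s := by
        apply mul_le_mul_of_nonneg_right _ (by positivity)
        exact Real.rpow_le_rpow_of_exponent_le one_le_two (by nlinarith)

end
end
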